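/- arXiv:2405.20986 — 2 statements merged into one kernel-verified Lean document; each statement's English description precedes it below -/
import Mathlib

section
/- Let p be a random probability vector on the C-simplex with distribution Dir(α), y a one-hot label, and γ ≥ 1. Then the expected focal loss E_{p~Dir(α)}[-Σ_c y_c (1-p_c)^γ log p_c] is bounded below by E_{p~Dir(α)}[-Σ_c y_c log p_c] - γ · E_{p~Dir(α)}[H(p)], where H(p) = -Σ_c p_c log p_c is the Shannon entropy of the categorical distribution p. -/
open MeasureTheory Real BigOperators

/-- The digamma function `ψ = (log ∘ Γ)'`. -/
noncomputable def digamma (x : ℝ) : ℝ := deriv (fun y => Real.log (Real.Gamma y)) x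

/-- The trigamma function `ψ₁ = ψ'`. -/
noncomputable def trigamma (x : ℝ) : ℝ := deriv digamma x

/-- The multivariate Beta function `B(α) = (∏ᵢ Γ(αᵢ)) / Γ(∑ᵢ αᵢ)`. -/
noncomputable def mvBeta {C : ℕ} (α : Fin C → ℝ) : ℝ :=
  (∏ i, Real.Gamma (α i)) / Real.Gamma (∑ i, α i)

/-- The Dirichlet density `D(p | α) = (1 / B(α)) ∏ᵢ pᵢ^(αᵢ - 1)`. -/
noncomputable def dirichletDensity {C : ℕ} (α p : Fin C → ℝ) : ℝ :=
  (∏ i, p i ^ (α i - 1)) / mvBeta α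

/-- Expectation `E_{p ~ Dir(α)}[g p]` for a Dirichlet distribution with `C + 1` categories,
written as an integral over the first `C` coordinates (the last coordinate being
`1 - ∑` of the others), against the Dirichlet density on the simplex. -/
noncomputable def dirichletExp {C : ℕ} (α : Fin (C + 1) → ℝ) (g : (Fin (C + 1) → ℝ) → ℝ) : ℝ :=
  ∫ x : Fin C → ℝ,
    Set.indicator {x : Fin C → ℝ | (∀ i, 0 ≤ x i) ∧ ∑ i, x i ≤ 1}
      (fun x =>
        dirichletDensity α (Fin.snoc x (1 - ∑ i, x i)) *
          g (Fin.snoc x (1 - ∑ i, x i))) x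

/-- Kullback–Leibler divergence `KL(Dir(α) ‖ Dir(α̂)) = E_{p ~ Dir(α)}[log (D(p|α)/D(p|α̂))]`. -/
noncomputable def dirichletKL {C : ℕ} (α αhat : Fin (C + 1) → ℝ) : ℝ :=
  dirichletExp α (fun p => Real.log (dirichletDensity α p / dirichletDensity αhat p))

/-- Differential entropy `H(Dir(α)) = E_{p ~ Dir(α)}[- log D(p|α)]`. -/
noncomputable def dirichletEntropy {C : ℕ} (α : Fin (C + 1) → ℝ) : ℝ :=
  dirichletExp α (fun p => - Real.log (dirichletDensity α p))

/-! For `q = p_{c*} ∈ [0, 1]`, Bernoulli's inequality `(1 - q)^γ ≥ 1 - γ q` gives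
`-log q ≤ -(1 - q)^γ log q + γ (-q log q)`, and `-q log q` is one of the nonnegative terms of the
Shannon entropy `H(p)`. Integrating against the Dirichlet density gives the bound, provided the
entropy term is integrable. Since `H` is bounded on the simplex, this reduces to integrability of
the density. On the part of the simplex where `p_j ≥ 1/(C+1)`, the density is dominated by a
product of integrable powers `x_i^(α_i - 1)` of the remaining coordinates. The affine map swapping
`p_j` with the implicit last coordinate is an involution, hence volume preserving, and it reduces
every `j` to the last one. -/

section

variable {E : Type*} [NormedAddCommGroup E] [NormedSpace ℝ E] [MeasurableSpace E] [BorelSpace E]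
  [FiniteDimensional ℝ E]

theorem LinearMap.measurePreserving_of_involutive (μ : Measure E) [μ.IsAddHaarMeasure]
    {f : E →ₗ[ℝ] E} (hf : Function.Involutive f) : MeasurePreserving f μ μ := by
  have hdet : |LinearMap.det f| = 1 := by
    have h : LinearMap.det f * LinearMap.det f = 1 := by
      rw [← LinearMap.det_comp, show f ∘ₗ f = LinearMap.id from LinearMap.ext hf,
        LinearMap.det_id]
    rw [← abs_mul_abs_self, mul_self_eq_one_iff] at h
    exact h.resolve_right (by linarith [abs_nonneg (LinearMap.det f)])
  refine ⟨(LinearMap.continuous_of_finiteDimensional f).measurable, ?_⟩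
  rw [Measure.map_linearMap_addHaar_eq_smul_addHaar μ (abs_ne_zero.1 (hdet.symm ▸ one_ne_zero)),
    abs_inv, hdet, inv_one, ENNReal.ofReal_one, one_smul]

end

variable {C : ℕ}

def simplexChart (C : ℕ) : Set (Fin C → ℝ) := {x | (∀ i, 0 ≤ x i) ∧ ∑ i, x i ≤ 1}

def simplexPoint (x : Fin C → ℝ) : Fin (C + 1) → ℝ := Fin.snoc x (1 - ∑ i, x i)

@[simp] lemma simplexPoint_castSucc (x : Fin C → ℝ) (i : Fin C) :
    simplexPoint x i.castSucc = x i := Fin.snoc_castSucc ..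

@[simp] lemma simplexPoint_last (x : Fin C → ℝ) :
    simplexPoint x (Fin.last C) = 1 - ∑ i, x i := Fin.snoc_last ..

lemma sum_simplexPoint (x : Fin C → ℝ) : ∑ i, simplexPoint x i = 1 := by
  simp [Fin.sum_univ_castSucc]

lemma simplexPoint_injective : Function.Injective (simplexPoint : (Fin C → ℝ) → _) :=
  fun x y h => funext fun i => by simpa using congrFun h i.castSucc

lemma mem_simplexChart_iff {x : Fin C → ℝ} :
    x ∈ simplexChart C ↔ simplexPoint x ∈ stdSimplex ℝ (Fin (C + 1)) := by
  simp [simplexChart, stdSimplex, sum_simplexPoint, Fin.forall_fin_succ', sub_nonneg, and_comm]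

@[fun_prop] lemma measurable_simplexPoint :
    Measurable (simplexPoint : (Fin C → ℝ) → Fin (C + 1) → ℝ) := by
  refine measurable_pi_lambda _ fun i => ?_
  induction i using Fin.lastCases with
  | last => simp only [simplexPoint_last]; fun_prop
  | cast i => simp only [simplexPoint_castSucc]; fun_prop

lemma measurableSet_simplexChart : MeasurableSet (simplexChart C) := by
  have : simplexChart C = simplexPoint ⁻¹' stdSimplex ℝ (Fin (C + 1)) := by
    ext x; exact mem_simplexChart_iff
  rw [this]
  exact measurable_simplexPoint (isClosed_stdSimplex ℝ _).measurableSet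

def swapLast (j : Fin C) (x : Fin C → ℝ) : Fin C → ℝ := Function.update x j (1 - ∑ i, x i)

lemma simplexPoint_swapLast (j : Fin C) (x : Fin C → ℝ) :
    simplexPoint (swapLast j x) = simplexPoint x ∘ Equiv.swap j.castSucc (Fin.last C) := by
  have hsum : ∑ i, swapLast j x i = 1 - x j := by
    rw [swapLast, Finset.sum_update_of_mem (Finset.mem_univ j), Finset.sum_sdiff_eq_sub
      (Finset.subset_univ _), Finset.sum_singleton]
    ring
  funext i
  induction i using Fin.lastCases with
  | last => simp [hsum]
  | cast i =>
    rcases eq_or_ne i j with rfl | h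
    · simp [swapLast]
    · simp [swapLast, h, Equiv.swap_apply_of_ne_of_ne, Fin.castSucc_ne_last]

lemma swapLast_involutive (j : Fin C) : Function.Involutive (swapLast j) := fun x =>
  simplexPoint_injective <| funext fun i => by simp [simplexPoint_swapLast]

lemma measurePreserving_swapLast (j : Fin C) : MeasurePreserving (swapLast j) := by
  let L : (Fin C → ℝ) →ₗ[ℝ] (Fin C → ℝ) :=
    { toFun := fun x => Function.update x j (-∑ i, x i)
      map_add' := fun x y => by
        ext i; rcases eq_or_ne i j with rfl | h <;> simp [*, Finset.sum_add_distrib]; ring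
      map_smul' := fun c x => by
        ext i; rcases eq_or_ne i j with rfl | h <;> simp [*, ← Finset.mul_sum] }
  have hswap : swapLast j = (Pi.single j 1 + ·) ∘ L := by
    ext x i; rcases eq_or_ne i j with rfl | h <;> simp [*, swapLast, L, sub_eq_add_neg]
  have hL : Function.Involutive L := fun x => by
    ext i; rcases eq_or_ne i j with rfl | h <;> simp [*, L, Finset.sum_update_of_mem]
  rw [hswap]
  exact (measurePreserving_add_left _ _).comp (L.measurePreserving_of_involutive volume hL)

lemma integrable_prod_indicator_rpow (c : Fin C → ℝ) (hc : ∀ i, -1 < c i) :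
    Integrable fun x : Fin C → ℝ => ∏ i, (Set.Icc (0 : ℝ) 1).indicator (· ^ c i) (x i) := by
  refine Integrable.fintype_prod (f := fun i => (Set.Icc (0 : ℝ) 1).indicator (· ^ c i))
    fun i => ?_
  rw [integrable_indicator_iff measurableSet_Icc, integrableOn_Icc_iff_integrableOn_Ioc,
    ← Set.uIoc_of_le zero_le_one, ← intervalIntegrable_iff]
  exact intervalIntegral.intervalIntegrable_rpow' (hc i)

lemma rpow_le_max_rpow_one {ε p : ℝ} (hε : 0 < ε) (hεp : ε ≤ p) (hp : p ≤ 1) (b : ℝ) :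
    p ^ b ≤ max (ε ^ b) 1 := by
  rcases le_total b 0 with hb | hb
  · exact le_max_of_le_left (Real.rpow_le_rpow_of_nonpos hε hεp hb)
  · exact le_max_of_le_right (Real.rpow_le_one (hε.le.trans hεp) hp hb)

lemma integrableOn_prod_rpow_of_le_last {b : Fin (C + 1) → ℝ} (hb : ∀ i, -1 < b i) {ε : ℝ}
    (hε : 0 < ε) :
    IntegrableOn (fun x => ∏ i, simplexPoint x i ^ b i)
      (simplexChart C ∩ {x | ε ≤ simplexPoint x (Fin.last C)}) := by
  refine Integrable.mono' (((integrable_prod_indicator_rpow _ fun i => hb i.castSucc).const_mul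
    (max (ε ^ b (Fin.last C)) 1)).integrableOn) (by fun_prop : Measurable _).aestronglyMeasurable ?_
  rw [ae_restrict_iff' (measurableSet_simplexChart.inter
    (measurableSet_le measurable_const (by fun_prop)))]
  refine ae_of_all _ fun x ⟨hx, hxε⟩ => ?_
  have hIcc := mem_Icc_of_mem_stdSimplex (mem_simplexChart_iff.1 hx)
  have hind : ∀ i, (Set.Icc (0 : ℝ) 1).indicator (· ^ b i.castSucc) (x i) = x i ^ b i.castSucc :=
    fun i => Set.indicator_of_mem (by simpa using hIcc i.castSucc) _
  have hprod : 0 ≤ ∏ i : Fin C, x i ^ b i.castSucc :=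
    Finset.prod_nonneg fun i _ => Real.rpow_nonneg (by simpa using (hIcc i.castSucc).1) _
  rw [Fin.prod_univ_castSucc, Real.norm_eq_abs, abs_of_nonneg (mul_nonneg (by simpa using hprod)
    (Real.rpow_nonneg (hIcc _).1 _)), mul_comm]
  simp only [simplexPoint_castSucc, hind]
  exact mul_le_mul_of_nonneg_right (rpow_le_max_rpow_one hε hxε (hIcc _).2 _) hprod

lemma comp_equiv_mem_stdSimplex_iff {ι : Type*} [Fintype ι] {p : ι → ℝ} (σ : ι ≃ ι) :
    p ∘ σ ∈ stdSimplex ℝ ι ↔ p ∈ stdSimplex ℝ ι :=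
  ⟨fun h => ⟨fun i => by simpa using h.1 (σ.symm i), (Equiv.sum_comp σ p).symm.trans h.2⟩,
    fun h => ⟨fun i => h.1 (σ i), (Equiv.sum_comp σ p).trans h.2⟩⟩

lemma integrableOn_prod_rpow_of_le {b : Fin (C + 1) → ℝ} (hb : ∀ i, -1 < b i) {ε : ℝ}
    (hε : 0 < ε) (j : Fin (C + 1)) :
    IntegrableOn (fun x => ∏ i, simplexPoint x i ^ b i)
      (simplexChart C ∩ {x | ε ≤ simplexPoint x j}) := by
  induction j using Fin.lastCases with
  | last => exact integrableOn_prod_rpow_of_le_last hb hε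
  | cast j =>
    set σ := Equiv.swap j.castSucc (Fin.last C)
    have hpre : simplexChart C ∩ {x | ε ≤ simplexPoint x j.castSucc} =
        swapLast j ⁻¹' (simplexChart C ∩ {x | ε ≤ simplexPoint x (Fin.last C)}) := by
      ext x
      simp only [Set.mem_inter_iff, Set.mem_preimage, mem_simplexChart_iff, Set.mem_ofPred_eq,
        simplexPoint_swapLast, comp_equiv_mem_stdSimplex_iff, Function.comp_apply,
        Equiv.swap_apply_right]
    have hfun : (fun x => ∏ i, simplexPoint x i ^ b i) =
        (fun x => ∏ i, simplexPoint x i ^ b (σ i)) ∘ swapLast j := by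
      ext x
      simp only [Function.comp_apply, simplexPoint_swapLast]
      exact (Equiv.prod_comp σ fun i => simplexPoint x i ^ b i).symm
    rw [hpre, hfun, (measurePreserving_swapLast j).integrableOn_comp_preimage
      (MeasurableEquiv.ofInvolutive _ (swapLast_involutive j)
        (measurePreserving_swapLast j).measurable).measurableEmbedding]
    exact integrableOn_prod_rpow_of_le_last (fun i => hb _) hε

lemma integrableOn_simplexChart_prod_rpow {b : Fin (C + 1) → ℝ} (hb : ∀ i, -1 < b i) :
    IntegrableOn (fun x => ∏ i, simplexPoint x i ^ b i) (simplexChart C) := by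
  have hcover : simplexChart C ⊆
      ⋃ j, simplexChart C ∩ {x | ((C : ℝ) + 1)⁻¹ ≤ simplexPoint x j} := by
    intro x hx
    obtain ⟨j, -, hj⟩ := Finset.exists_le_of_sum_le Finset.univ_nonempty
      (f := fun _ => ((C : ℝ) + 1)⁻¹) (g := simplexPoint x)
      (by simp [sum_simplexPoint, mul_inv_cancel₀ (by positivity : (C : ℝ) + 1 ≠ 0)])
    exact Set.mem_iUnion.2 ⟨j, hx, hj⟩
  exact (integrableOn_finite_iUnion.2 fun j =>
    integrableOn_prod_rpow_of_le hb (by positivity) j).mono_set hcover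

lemma mvBeta_nonneg {α : Fin C → ℝ} (hα : ∀ i, 0 ≤ α i) : 0 ≤ mvBeta α :=
  div_nonneg (Finset.prod_nonneg fun i _ => Real.Gamma_nonneg_of_nonneg (hα i))
    (Real.Gamma_nonneg_of_nonneg (Finset.sum_nonneg fun i _ => hα i))

lemma dirichletDensity_nonneg {α p : Fin C → ℝ} (hα : ∀ i, 0 ≤ α i) (hp : ∀ i, 0 ≤ p i) :
    0 ≤ dirichletDensity α p :=
  div_nonneg (Finset.prod_nonneg fun i _ => Real.rpow_nonneg (hp i) _) (mvBeta_nonneg hα)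

lemma integrableOn_dirichletDensity {α : Fin (C + 1) → ℝ} (hα : ∀ i, 0 < α i) :
    IntegrableOn (fun x => dirichletDensity α (simplexPoint x)) (simplexChart C) :=
  (integrableOn_simplexChart_prod_rpow fun i => by linarith [hα i]).div_const _

section

variable (α : Fin (C + 1) → ℝ) (g h : (Fin (C + 1) → ℝ) → ℝ)

noncomputable def dirichletIntegrand : (Fin C → ℝ) → ℝ :=
  (simplexChart C).indicator fun x => dirichletDensity α (simplexPoint x) * g (simplexPoint x)

lemma dirichletExp_eq_integral : dirichletExp α g = ∫ x, dirichletIntegrand α g x := rfl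

lemma dirichletIntegrand_add_const_mul (c : ℝ) :
    dirichletIntegrand α (fun p => g p + c * h p) =
      dirichletIntegrand α g + c • dirichletIntegrand α h := by
  ext x
  by_cases hx : x ∈ simplexChart C <;> simp [dirichletIntegrand, hx]
  ring

variable {α g h}

lemma measurable_dirichletIntegrand (hg : Measurable g) :
    Measurable (dirichletIntegrand (C := C) α g) := by
  refine Measurable.indicator ?_ measurableSet_simplexChart
  simp only [dirichletDensity, mvBeta]
  fun_prop

lemma dirichletIntegrand_mono (hα : ∀ i, 0 ≤ α i)
    (hgh : ∀ p ∈ stdSimplex ℝ (Fin (C + 1)), g p ≤ h p) :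
    dirichletIntegrand (C := C) α g ≤ dirichletIntegrand α h := by
  intro x
  by_cases hx : x ∈ simplexChart C
  · have hp := mem_simplexChart_iff.1 hx
    simp only [dirichletIntegrand, Set.indicator_of_mem hx]
    exact mul_le_mul_of_nonneg_left (hgh _ hp) (dirichletDensity_nonneg hα hp.1)
  · simp [dirichletIntegrand, hx]

lemma integrable_dirichletIntegrand (hα : ∀ i, 0 < α i) (hg : Measurable g) {K : ℝ}
    (hK : ∀ p ∈ stdSimplex ℝ (Fin (C + 1)), |g p| ≤ K) :
    Integrable (dirichletIntegrand (C := C) α g) := by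
  refine (integrable_indicator_iff measurableSet_simplexChart).2 <|
    ((integrableOn_dirichletDensity hα).mul_const K).mono' ?_ ?_
  · simp only [dirichletDensity, mvBeta]
    fun_prop
  rw [ae_restrict_iff' measurableSet_simplexChart]
  refine ae_of_all _ fun x hx => ?_
  have hp := mem_simplexChart_iff.1 hx
  rw [Real.norm_eq_abs, abs_mul, abs_of_nonneg (dirichletDensity_nonneg (fun i => (hα i).le) hp.1)]
  exact mul_le_mul_of_nonneg_left (hK _ hp) (dirichletDensity_nonneg (fun i => (hα i).le) hp.1)

end

lemma integral_le_integral_add_integral_of_le_add {X : Type*} [MeasurableSpace X] {μ : Measure X}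
    {f g h : X → ℝ} (hf : AEStronglyMeasurable f μ) (hg : AEStronglyMeasurable g μ)
    (hh : Integrable h μ) (hfg : f ≤ᵐ[μ] g) (hgh : g ≤ᵐ[μ] f + h) :
    ∫ x, g x ∂μ ≤ ∫ x, f x ∂μ + ∫ x, h x ∂μ := by
  have hsub : Integrable (g - f) μ := by
    refine hh.mono' (hg.sub hf) ?_
    filter_upwards [hfg, hgh] with x h₁ h₂
    simp only [Pi.add_apply, Pi.sub_apply] at h₂ ⊢
    rw [Real.norm_eq_abs, abs_of_nonneg (sub_nonneg.2 h₁)]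
    linarith
  have hsub_le : g - f ≤ᵐ[μ] h := by
    filter_upwards [hgh] with x hx
    simp only [Pi.add_apply, Pi.sub_apply] at hx ⊢
    linarith
  by_cases hfi : Integrable f μ
  · calc ∫ x, g x ∂μ = ∫ x, f x ∂μ + ∫ x, (g - f) x ∂μ := by
          rw [← integral_add hfi hsub]; simp
      _ ≤ ∫ x, f x ∂μ + ∫ x, h x ∂μ :=
          add_le_add_right (integral_mono_ae hsub hh hsub_le) _
  · -- with `f` not integrable, neither is `g = f + (g - f)`, so both integrals vanish
    have hgi : ¬ Integrable g μ := fun hgi => hfi (by simpa using hgi.sub hsub)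
    rw [integral_undef hfi, integral_undef hgi, zero_add]
    refine integral_nonneg_of_ae ?_
    filter_upwards [hfg, hsub_le] with x h₁ h₂
    simp only [Pi.sub_apply, Pi.zero_apply] at h₂ ⊢
    linarith

lemma neg_rpow_mul_log_le_neg_log {q γ : ℝ} (hq₀ : 0 ≤ q) (hq₁ : q ≤ 1) (hγ : 0 ≤ γ) :
    -((1 - q) ^ γ * Real.log q) ≤ -Real.log q := by
  have hlog := Real.log_nonpos hq₀ hq₁
  have hpow : (1 - q) ^ γ ≤ 1 := Real.rpow_le_one (by linarith) (by linarith) hγ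
  nlinarith

lemma neg_log_le_neg_rpow_mul_log_add {q γ : ℝ} (hq₀ : 0 ≤ q) (hq₁ : q ≤ 1) (hγ : 1 ≤ γ) :
    -Real.log q ≤ -((1 - q) ^ γ * Real.log q) + γ * Real.negMulLog q := by
  have hlog := Real.log_nonpos hq₀ hq₁
  have hbernoulli : 1 - γ * q ≤ (1 - q) ^ γ := by
    simpa [sub_eq_add_neg] using one_add_mul_self_le_rpow_one_add (s := -q) (by linarith) hγ
  rw [Real.negMulLog]
  nlinarith

lemma neg_sum_mul_log_eq_sum_negMulLog {ι : Type*} [Fintype ι] (p : ι → ℝ) :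
    -∑ i, p i * Real.log (p i) = ∑ i, Real.negMulLog (p i) := by
  simp [Real.negMulLog, Finset.sum_neg_distrib]

lemma negMulLog_le_neg_sum_mul_log {ι : Type*} [Fintype ι] {p : ι → ℝ} (hp : p ∈ stdSimplex ℝ ι)
    (c : ι) : Real.negMulLog (p c) ≤ -∑ i, p i * Real.log (p i) := by
  rw [neg_sum_mul_log_eq_sum_negMulLog]
  exact Finset.single_le_sum (fun i _ => Real.negMulLog_nonneg (hp.1 i)
    (mem_Icc_of_mem_stdSimplex hp i).2) (Finset.mem_univ c)

lemma abs_neg_sum_mul_log_le {ι : Type*} [Fintype ι] {p : ι → ℝ} (hp : p ∈ stdSimplex ℝ ι) :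
    |-∑ i, p i * Real.log (p i)| ≤ Fintype.card ι := by
  rw [neg_sum_mul_log_eq_sum_negMulLog, abs_of_nonneg (Finset.sum_nonneg fun i _ =>
    Real.negMulLog_nonneg (hp.1 i) (mem_Icc_of_mem_stdSimplex hp i).2)]
  calc ∑ i, Real.negMulLog (p i) ≤ ∑ _i : ι, (1 : ℝ) := Finset.sum_le_sum fun i _ =>
        (Real.negMulLog_le_one_sub_self (hp.1 i)).trans (by linarith [hp.1 i])
    _ = Fintype.card ι := by simp

lemma neg_log_le_focal_add_mul_entropy {ι : Type*} [Fintype ι] {p : ι → ℝ}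
    (hp : p ∈ stdSimplex ℝ ι) (c : ι) {γ : ℝ} (hγ : 1 ≤ γ) :
    -Real.log (p c) ≤ -((1 - p c) ^ γ * Real.log (p c)) + γ * -∑ i, p i * Real.log (p i) := by
  have hq := mem_Icc_of_mem_stdSimplex hp c
  have := mul_le_mul_of_nonneg_left (negMulLog_le_neg_sum_mul_log hp c) (by linarith : 0 ≤ γ)
  linarith [neg_log_le_neg_rpow_mul_log_add hq.1 hq.2 hγ]

/-- For `γ ≥ 1` and a one-hot label `y`, the expected focal loss under `Dir(α)` is bounded
below by the expected cross-entropy minus `γ` times the expected Shannon entropy of `p`. -/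
theorem expected_focal_loss_lower_bound
    (C : ℕ) (α : Fin (C + 1) → ℝ) (hα : ∀ i, 0 < α i)
    (cstar : Fin (C + 1)) (y : Fin (C + 1) → ℝ)
    (hy : y = fun c => if c = cstar then 1 else 0)
    (γ : ℝ) (hγ : 1 ≤ γ) :
    dirichletExp α (fun p => -∑ c, y c * (1 - p c) ^ γ * Real.log (p c)) ≥
      dirichletExp α (fun p => -∑ c, y c * Real.log (p c)) -
        γ * dirichletExp α (fun p => -∑ c, p c * Real.log (p c)) := by
  subst hy
  simp only [ite_mul, one_mul, zero_mul, Finset.sum_ite_eq', Finset.mem_univ, if_true]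
  set focal := fun p : Fin (C + 1) → ℝ => -((1 - p cstar) ^ γ * Real.log (p cstar))
  set crossEntropy := fun p : Fin (C + 1) → ℝ => -Real.log (p cstar)
  set entropy := fun p : Fin (C + 1) → ℝ => -∑ c, p c * Real.log (p c)
  have hα₀ : ∀ i, 0 ≤ α i := fun i => (hα i).le
  have hfocal : dirichletIntegrand α focal ≤ dirichletIntegrand α crossEntropy :=
    dirichletIntegrand_mono hα₀ fun p hp => neg_rpow_mul_log_le_neg_log (hp.1 cstar)
      (mem_Icc_of_mem_stdSimplex hp cstar).2 (by linarith)
  have hcross : dirichletIntegrand α crossEntropy ≤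
      dirichletIntegrand α focal + γ • dirichletIntegrand α entropy := by
    rw [← dirichletIntegrand_add_const_mul]
    exact dirichletIntegrand_mono hα₀ fun p hp => neg_log_le_focal_add_mul_entropy hp cstar hγ
  have key := integral_le_integral_add_integral_of_le_add
    (measurable_dirichletIntegrand (by fun_prop)).aestronglyMeasurable
    (measurable_dirichletIntegrand (by fun_prop)).aestronglyMeasurable
    ((integrable_dirichletIntegrand hα (by fun_prop) fun p hp => abs_neg_sum_mul_log_le hp).smul γ)
    (ae_of_all _ hfocal) (ae_of_all _ hcross)
  simp only [Pi.smul_apply, smul_eq_mul, integral_const_mul] at key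
  simp only [dirichletExp_eq_integral]
  linarith
end

section
/- The trigamma function ψ_1 is strictly decreasing on (0, ∞); hence for α_0 > α_{c*} > 0 (with α_0 = Σ_c α_c and C ≥ 2 categories each with α_c ≥ 1), the UCE gradient ψ_1(α_0) - ψ_1(α_{c*}) is strictly negative, so increasing the ground-truth evidence α_{c*} always strictly decreases the UCE loss ψ(α_0) - ψ(α_{c*}). -/
/-!
On `(0, ∞)` the Euler limit `log Γ(x) = lim (x log n + log n! - ∑_{m ≤ n} log (x + m))`
can be differentiated term by term, since the derivatives converge locally uniformly. This
gives `ψ(x) = -γ - 1/x + ∑_k (1/(k+1) - 1/(x+k+1))` and, differentiating once more,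
`ψ₁(x) = ∑_{k ≥ 0} 1/(x+k)^2`, a sum of strictly decreasing terms. With `B = α₀ - α_{c*} > 0`
the evidence of the other classes, the UCE loss is `t ↦ ψ(t + B) - ψ(t)`, whose derivative
`ψ₁(t + B) - ψ₁(t)` is negative.
-/

open Real BigOperators

open Filter Topology Set

noncomputable def digammaTerm (k : ℕ) (x : ℝ) : ℝ := 1 / (k + 1) - 1 / (x + k + 1)

noncomputable def digammaSeries (x : ℝ) : ℝ :=
  -eulerMascheroniConstant + (-(1 / x) + ∑' k : ℕ, digammaTerm k x)

noncomputable def trigammaSeries (x : ℝ) : ℝ := 1 / x ^ 2 + ∑' k : ℕ, 1 / (x + k + 1) ^ 2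

lemma summable_one_div_nat_add_one_sq : Summable fun k : ℕ => 1 / ((k : ℝ) + 1) ^ 2 :=
  ((summable_nat_add_iff 1).mpr <| Real.summable_one_div_nat_pow.mpr one_lt_two).congr
    fun k => by push_cast; ring

lemma one_div_add_nat_add_one_sq_le {x : ℝ} (hx : 0 ≤ x) (k : ℕ) :
    1 / (x + k + 1) ^ 2 ≤ 1 / ((k : ℝ) + 1) ^ 2 := by
  gcongr
  linarith

lemma summable_one_div_add_nat_add_one_sq {x : ℝ} (hx : 0 ≤ x) :
    Summable fun k : ℕ => 1 / (x + k + 1) ^ 2 :=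
  summable_one_div_nat_add_one_sq.of_nonneg_of_le (fun k => by positivity)
    (one_div_add_nat_add_one_sq_le hx)

lemma digammaTerm_eq (k : ℕ) {x : ℝ} (hx : 0 ≤ x) :
    digammaTerm k x = x / ((k + 1) * (x + k + 1)) := by
  unfold digammaTerm
  field_simp
  ring

lemma digammaTerm_nonneg (k : ℕ) {x : ℝ} (hx : 0 ≤ x) : 0 ≤ digammaTerm k x := by
  rw [digammaTerm_eq k hx]
  positivity

lemma digammaTerm_le (k : ℕ) {x : ℝ} (hx : 0 ≤ x) :
    digammaTerm k x ≤ x * (1 / ((k : ℝ) + 1) ^ 2) := by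
  rw [digammaTerm_eq k hx, mul_one_div, sq]
  gcongr
  linarith

lemma summable_digammaTerm {x : ℝ} (hx : 0 ≤ x) : Summable fun k => digammaTerm k x :=
  (summable_one_div_nat_add_one_sq.mul_left x).of_nonneg_of_le (digammaTerm_nonneg · hx)
    (digammaTerm_le · hx)

lemma tendsto_log_sub_sum_range_one_div :
    Tendsto (fun n : ℕ => log n - ∑ i ∈ Finset.range n, 1 / ((i : ℝ) + 1)) atTop
      (𝓝 (-eulerMascheroniConstant)) := by
  refine tendsto_eulerMascheroniSeq'.neg.congr' ?_
  filter_upwards [eventually_ne_atTop 0] with n hn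
  simp [eulerMascheroniSeq', hn, harmonic]

lemma hasDerivAt_logGammaSeq (n : ℕ) {y : ℝ} (hy : 0 < y) :
    HasDerivAt (BohrMollerup.logGammaSeq · n)
      (log n - ∑ m ∈ Finset.range (n + 1), 1 / (y + m)) y := by
  have hsum : HasDerivAt (fun y : ℝ => ∑ m ∈ Finset.range (n + 1), log (y + m))
      (∑ m ∈ Finset.range (n + 1), 1 / (y + m)) y :=
    HasDerivAt.fun_sum fun m _ => by
      simpa [one_div] using ((hasDerivAt_id y).add_const (m : ℝ)).log (by positivity)
  have hlin : HasDerivAt (fun y : ℝ => y * log n + log n.factorial) (log n) y := by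
    simpa using ((hasDerivAt_id y).mul_const (log n)).add_const (log n.factorial)
  exact hlin.sub hsum

lemma log_sub_sum_range_one_div_add_nat (n : ℕ) (y : ℝ) :
    log n - ∑ m ∈ Finset.range (n + 1), 1 / (y + m) =
      (log n - ∑ i ∈ Finset.range n, 1 / ((i : ℝ) + 1)) +
        (-(1 / y) + ∑ k ∈ Finset.range n, digammaTerm k y) := by
  simp only [Finset.sum_range_succ', digammaTerm, Finset.sum_sub_distrib]
  push_cast
  simp only [add_zero, add_assoc]
  ring

lemma hasDerivAt_log_Gamma {x : ℝ} (hx : 0 < x) :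
    HasDerivAt (fun y => log (Gamma y)) (digammaSeries x) x := by
  set s := Ioo 0 (x + 1)
  have hconst :
      TendstoUniformlyOn (fun (_ : ℕ) (y : ℝ) => -(1 / y)) (fun y => -(1 / y)) atTop s :=
    fun _ hu => Eventually.of_forall fun _ _ _ => refl_mem_uniformity hu
  have hseries : TendstoUniformlyOn (fun n y => ∑ k ∈ Finset.range n, digammaTerm k y)
      (fun y => ∑' k, digammaTerm k y) atTop s := by
    refine tendstoUniformlyOn_tsum_nat (summable_one_div_nat_add_one_sq.mul_left (x + 1))
      fun k y hy => ?_
    rw [Real.norm_of_nonneg (digammaTerm_nonneg k hy.1.le)]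
    exact (digammaTerm_le k hy.1.le).trans (by gcongr; exact hy.2.le)
  have hderiv : TendstoUniformlyOn
      (fun (n : ℕ) (y : ℝ) => log n - ∑ m ∈ Finset.range (n + 1), 1 / (y + m)) digammaSeries
      atTop s :=
    ((tendsto_log_sub_sum_range_one_div.tendstoUniformlyOn_const s).add
      (hconst.add hseries)).congr <| .of_forall fun n y _ =>
        (log_sub_sum_range_one_div_add_nat n y).symm
  exact hasDerivAt_of_tendstoUniformlyOn isOpen_Ioo hderiv
    (.of_forall fun n y hy => hasDerivAt_logGammaSeq n hy.1)
    (fun y hy => BohrMollerup.tendsto_log_gamma hy.1) ⟨hx, by linarith⟩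

lemma hasDerivAt_digammaTerm (k : ℕ) {y : ℝ} (hy : 0 ≤ y) :
    HasDerivAt (digammaTerm k) (1 / (y + k + 1) ^ 2) y := by
  have h : HasDerivAt (fun x : ℝ => x + k + 1) 1 y := ((hasDerivAt_id' y).add_const _).add_const _
  exact (((h.inv (by positivity)).const_sub (1 / ((k : ℝ) + 1))).congr_deriv (by ring))
    |>.congr_of_eventuallyEq (.of_forall fun x => by simp [digammaTerm])

lemma hasDerivAt_digammaSeries {x : ℝ} (hx : 0 < x) :
    HasDerivAt digammaSeries (trigammaSeries x) x := by
  have hinv : HasDerivAt (fun y : ℝ => -(1 / y)) (1 / x ^ 2) x := by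
    simpa [one_div, Pi.neg_def] using (hasDerivAt_inv hx.ne').neg
  have htsum :
      HasDerivAt (fun y => ∑' k, digammaTerm k y) (∑' k : ℕ, 1 / (x + k + 1) ^ 2) x :=
    hasDerivAt_tsum_of_isPreconnected summable_one_div_nat_add_one_sq isOpen_Ioi isPreconnected_Ioi
      (fun k y hy => hasDerivAt_digammaTerm k (le_of_lt hy))
      (fun k y hy => by
        rw [Real.norm_of_nonneg (by positivity)]
        exact one_div_add_nat_add_one_sq_le (le_of_lt hy) k)
      (mem_Ioi.2 hx) (summable_digammaTerm hx.le) (mem_Ioi.2 hx)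
  exact (hinv.add htsum).const_add (-eulerMascheroniConstant)

lemma hasDerivAt_digamma {x : ℝ} (hx : 0 < x) : HasDerivAt digamma (trigammaSeries x) x :=
  (hasDerivAt_digammaSeries hx).congr_of_eventuallyEq <| by
    filter_upwards [Ioi_mem_nhds hx] with y hy using (hasDerivAt_log_Gamma hy).deriv

lemma trigamma_eq_trigammaSeries {x : ℝ} (hx : 0 < x) : trigamma x = trigammaSeries x :=
  (hasDerivAt_digamma hx).deriv

lemma trigammaSeries_strictAntiOn : StrictAntiOn trigammaSeries (Ioi 0) := by
  intro a (ha : 0 < a) b (hb : 0 < b) hab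
  have hhead : 1 / b ^ 2 < 1 / a ^ 2 := by gcongr
  have htail : ∑' k : ℕ, 1 / (b + k + 1) ^ 2 ≤ ∑' k : ℕ, 1 / (a + k + 1) ^ 2 :=
    Summable.tsum_le_tsum (fun k => by gcongr) (summable_one_div_add_nat_add_one_sq hb.le)
      (summable_one_div_add_nat_add_one_sq ha.le)
  exact add_lt_add_of_lt_of_le hhead htail

lemma trigamma_strictAntiOn : StrictAntiOn trigamma (Ioi 0) := fun a ha b hb hab => by
  rw [trigamma_eq_trigammaSeries ha, trigamma_eq_trigammaSeries hb]
  exact trigammaSeries_strictAntiOn ha hb hab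

lemma strictAntiOn_comp_add_sub_of_hasDerivAt {f f' : ℝ → ℝ} {a B : ℝ} (hB : 0 < B)
    (hf : ∀ x ∈ Ioi a, HasDerivAt f (f' x) x) (hf' : StrictAntiOn f' (Ioi a)) :
    StrictAntiOn (fun t => f (t + B) - f t) (Ioi a) := by
  have hderiv : ∀ t ∈ Ioi a, HasDerivAt (fun t => f (t + B) - f t) (f' (t + B) - f' t) t :=
    fun t (ht : a < t) =>
      ((hf (t + B) (show a < t + B by linarith)).comp_add_const t B).sub (hf t ht)
  refine strictAntiOn_of_deriv_neg (convex_Ioi a)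
    (fun t ht => (hderiv t ht).continuousAt.continuousWithinAt) fun t ht => ?_
  rw [interior_Ioi] at ht
  rw [(hderiv t ht).deriv, sub_neg]
  exact hf' ht (show a < t + B by linarith [mem_Ioi.1 ht]) (by linarith)

lemma sum_update_eq_add_sum_sub {ι M : Type*} [Fintype ι] [DecidableEq ι] [AddCommGroup M]
    (f : ι → M) (i : ι) (b : M) : ∑ j, Function.update f i b j = b + (∑ j, f j - f i) := by
  rw [Finset.sum_update_of_mem (Finset.mem_univ i), Finset.sdiff_singleton_eq_erase,
    Finset.sum_erase_eq_sub (Finset.mem_univ i)]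

/-- The trigamma function is strictly decreasing on `(0, ∞)`; hence for `α₀ > α_{c*} > 0`
(with `α₀ = ∑ c, α_c`, at least two categories, each `α_c ≥ 1`), the UCE gradient
`ψ₁(α₀) - ψ₁(α_{c*})` is strictly negative, so increasing the ground-truth evidence
`α_{c*}` strictly decreases the UCE loss `ψ(α₀) - ψ(α_{c*})`. -/
theorem trigamma_strictAnti_and_UCE_strictly_decreasing :
    StrictAntiOn trigamma (Set.Ioi (0 : ℝ)) ∧
    ∀ (C : ℕ) (α : Fin C → ℝ) (cstar : Fin C),
      2 ≤ C → (∀ c, 1 ≤ α c) → 0 < α cstar → α cstar < ∑ c, α c →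
      trigamma (∑ c, α c) - trigamma (α cstar) < 0 ∧
        StrictAntiOn (fun t => digamma (∑ c, Function.update α cstar t c) - digamma t)
          (Set.Ioi (0 : ℝ)) := by
  refine ⟨trigamma_strictAntiOn, fun C α cstar _ _ hstar_pos hstar_lt => ⟨?_, ?_⟩⟩
  · exact sub_neg.2 (trigamma_strictAntiOn hstar_pos (hstar_pos.trans hstar_lt) hstar_lt)
  · simp_rw [sum_update_eq_add_sum_sub]
    exact strictAntiOn_comp_add_sub_of_hasDerivAt (sub_pos.2 hstar_lt)
      (fun x hx => trigamma_eq_trigammaSeries hx ▸ hasDerivAt_digamma hx) trigamma_strictAntiOn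
end
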